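/- arXiv:2107.06864 — 3 statements merged into one kernel-verified Lean document; each statement's English description precedes it below -/
import Mathlib

section
/- For every p ∈ ℕ₀, every composition (k_1,…,k_r) ∈ ℕ^r, and every n ∈ ℕ, the extended multiple harmonic sums satisfy the recurrence H_n(−p, k_1,…,k_r) = H_n(−p)·H_n(k_1,…,k_r) − Σ_{j=0}^{p} binom(p+1, j)·(B_j/(p+1))·H_n(k_1 + j − p − 1, k_2,…,k_r). -/
/-- Extended multiple harmonic sum `H_n(k_1,…,k_r) = ∑_{n ≥ n_1 > ⋯ > n_r ≥ 1} 1/(n_1^{k_1} ⋯ n_r^{k_r})`,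
with `H_n(∅) = 1`; the exponents may be arbitrary integers.  In particular `Hs n [-(p:ℤ)] = ∑_{m=1}^n m^p`
and `Hs n [1]` is the `n`-th harmonic number. -/
def Hs : ℕ → List ℤ → ℚ
  | _, [] => 1
  | n, k :: ks => ∑ m ∈ Finset.Icc 1 n, ((m : ℚ) ^ k)⁻¹ * Hs (m - 1) ks


lemma Hs_cons (n : ℕ) (k : ℤ) (l : List ℤ) :
    Hs n (k :: l) = ∑ m ∈ Finset.Icc 1 n, ((m : ℚ) ^ k)⁻¹ * Hs (m - 1) l := rfl

lemma Hs_succ (n : ℕ) (k : ℤ) (l : List ℤ) :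
    Hs (n + 1) (k :: l) = Hs n (k :: l) + (((n + 1 : ℕ) : ℚ) ^ k)⁻¹ * Hs n l := by
  rw [Hs_cons, Hs_cons, Finset.sum_Icc_succ_top (Nat.le_add_left 1 n)]
  simp

lemma Hs_single (m : ℕ) (p : ℕ) :
    Hs m [-(p : ℤ)] = ∑ i ∈ Finset.Icc 1 m, (i : ℚ) ^ p := by
  rw [Hs_cons]
  refine Finset.sum_congr rfl fun i _ => ?_
  simp [Hs, zpow_neg]

/-- Abel-summation style key identity. -/
lemma Hs_key (p : ℕ) (k : ℤ) (l : List ℤ) (n : ℕ) :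
    Hs n (-(p : ℤ) :: k :: l) =
      Hs n [-(p : ℤ)] * Hs n (k :: l) -
        ∑ m ∈ Finset.Icc 1 n, Hs m [-(p : ℤ)] * ((m : ℚ) ^ k)⁻¹ * Hs (m - 1) l := by
  induction n with
  | zero => simp [Hs_cons]
  | succ n ih =>
    rw [Hs_succ, ih, Finset.sum_Icc_succ_top (Nat.le_add_left 1 n), Hs_succ, Hs_succ]
    have h2 : ((((n : ℕ) + 1 : ℕ) : ℚ) ^ (-(p : ℤ)))⁻¹ = ((n + 1 : ℕ) : ℚ) ^ p := by
      rw [zpow_neg, inv_inv, zpow_natCast]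
    simp only [show Hs n ([] : List ℤ) = 1 from rfl, h2, Nat.add_sub_cancel]
    ring

lemma faulhaber_term (p k₁ : ℕ) (m : ℕ) (hm : 1 ≤ m) :
    ∑ j ∈ Finset.range (p + 1),
        ((p + 1).choose j : ℚ) * (bernoulli' j / (p + 1)) * ((m : ℚ) ^ ((k₁ : ℤ) + j - p - 1))⁻¹ =
      Hs m [-(p : ℤ)] * ((m : ℚ) ^ (k₁ : ℤ))⁻¹ := by
  have hm0 : (m : ℚ) ≠ 0 := Nat.cast_ne_zero.mpr (by omega)
  have hfaul : Hs m [-(p : ℤ)] =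
      ∑ j ∈ Finset.range (p + 1),
        bernoulli' j * ((p + 1).choose j) * (m : ℚ) ^ (p + 1 - j) / (p + 1) := by
    rw [Hs_single, show Finset.Icc 1 m = Finset.Ico 1 (m + 1) by rfl]
    exact sum_Ico_pow m p
  rw [hfaul, Finset.sum_mul]
  refine Finset.sum_congr rfl fun j hj => ?_
  have hjp : j ≤ p := Nat.lt_succ_iff.mp (Finset.mem_range.mp hj)
  have hx : ((m : ℚ) ^ ((k₁ : ℤ) + j - p - 1))⁻¹ =
      (m : ℚ) ^ (p + 1 - j : ℕ) * ((m : ℚ) ^ (k₁ : ℤ))⁻¹ := by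
    rw [← zpow_natCast (m : ℚ) (p + 1 - j), ← zpow_neg, ← zpow_neg, ← zpow_add₀ hm0]
    congr 1
    have : ((p + 1 - j : ℕ) : ℤ) = (p : ℤ) + 1 - j := by omega
    rw [this]; ring
  rw [hx]
  ring


/-- For every `p ∈ ℕ₀`, every composition `(k₁,…,k_r) ∈ ℕ^r` and every `n ∈ ℕ`,
`H_n(−p, k₁,…,k_r) = H_n(−p)·H_n(k₁,…,k_r)
   − ∑_{j=0}^{p} binom(p+1, j)·(B_j/(p+1))·H_n(k₁ + j − p − 1, k₂,…,k_r)`. -/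
theorem stmt_0 (p : ℕ) (k₁ : ℕ) (ks : List ℕ) (hk₁ : 0 < k₁) (hks : ∀ x ∈ ks, 0 < x)
    (n : ℕ) (hn : 0 < n) :
    Hs n (-(p : ℤ) :: (k₁ : ℤ) :: ks.map (fun x => (x : ℤ))) =
      Hs n [-(p : ℤ)] * Hs n ((k₁ : ℤ) :: ks.map (fun x => (x : ℤ))) -
        ∑ j ∈ Finset.range (p + 1),
          ((p + 1).choose j : ℚ) * (bernoulli' j / (p + 1)) *
            Hs n (((k₁ : ℤ) + j - p - 1) :: ks.map (fun x => (x : ℤ))) := by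
  rw [Hs_key]
  congr 1
  calc
    ∑ m ∈ Finset.Icc 1 n,
        Hs m [-(p : ℤ)] * ((m : ℚ) ^ (k₁ : ℤ))⁻¹ * Hs (m - 1) (ks.map (fun x => (x : ℤ)))
      = ∑ m ∈ Finset.Icc 1 n, ∑ j ∈ Finset.range (p + 1),
          ((p + 1).choose j : ℚ) * (bernoulli' j / (p + 1)) *
            ((m : ℚ) ^ ((k₁ : ℤ) + j - p - 1))⁻¹ * Hs (m - 1) (ks.map (fun x => (x : ℤ))) := by
        refine Finset.sum_congr rfl fun m hm => ?_
        rw [← Finset.sum_mul, faulhaber_term p k₁ m (Finset.mem_Icc.mp hm).1]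
    _ = ∑ j ∈ Finset.range (p + 1),
          ((p + 1).choose j : ℚ) * (bernoulli' j / (p + 1)) *
            Hs n (((k₁ : ℤ) + j - p - 1) :: ks.map (fun x => (x : ℤ))) := by
        rw [Finset.sum_comm]
        refine Finset.sum_congr rfl fun j hj => ?_
        rw [Hs_cons, Finset.mul_sum]
        exact Finset.sum_congr rfl fun m hm => by ring
end

section
/- For every p ∈ ℕ₀, every r ∈ ℕ, and every n ∈ ℕ, one has H_n(−p, {1}_r) = H_n(−p)·H_n({1}_r) + Σ_{i=1}^{r} (−1)^i · C^{(p)}_{0,…,0}(n) · H_n({1}_{r−i}), where in the i-th summand the subscript of C^{(p)} consists of i zeros, and {1}_m denotes the string of m ones (so H_n({1}_0) = 1). -/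
/-- The polynomial `C^{(p)}_{a_2,…,a_r}(x)`, where the list `a = [a_1, a_2, …, a_r]` is the *full*
subscript list including the leading `a_1 = 0` (so `Cpoly p [0]` is `C^{(p)}`, `Cpoly p [0,0]`
is `C^{(p)}_0`, `Cpoly p [0,1,2]` is `C^{(p)}_{1,2}`, …):
`C^{(p)}_{a_2,…,a_r}(x) = ∑_{j_1,…,j_r ≥ 0, j_1+⋯+j_r ≤ p-a_r}
  (∏_{i=1}^r binom(p+1-a_i-j_1-⋯-j_{i-1}, j_i) B_{j_i} / (p+1-a_i-j_1-⋯-j_{i-1}))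
    x^{p+1-a_r-j_1-⋯-j_r}`,
the zero polynomial if `p < a_r`, with `B_j = bernoulli' j`. -/
noncomputable def Cpoly (p : ℕ) (a : List ℕ) : Polynomial ℚ :=
  ∑ j ∈ Fintype.piFinset (fun _ : Fin a.length => Finset.range (p + 1)),
    if (∑ i, j i) + a.getLastD 0 ≤ p then
      Polynomial.C (∏ i : Fin a.length,
        ((p + 1 - a.get i - ∑ i' ∈ Finset.Iio i, j i').choose (j i) : ℚ) * bernoulli' (j i) /
          ((p + 1 - a.get i - ∑ i' ∈ Finset.Iio i, j i' : ℕ) : ℚ)) *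
        Polynomial.X ^ (p + 1 - a.getLastD 0 - ∑ i, j i)
    else 0

open Finset

noncomputable def CpolyZ (p t : ℕ) : Polynomial ℚ :=
  ∑ j ∈ Fintype.piFinset (fun _ : Fin t => Finset.range (p + 1)),
    if (∑ i, j i) ≤ p then
      Polynomial.C (∏ i : Fin t,
        ((p + 1 - ∑ i' ∈ Finset.Iio i, j i').choose (j i) : ℚ) * bernoulli' (j i) /
          ((p + 1 - ∑ i' ∈ Finset.Iio i, j i' : ℕ) : ℚ)) *
        Polynomial.X ^ (p + 1 - ∑ i, j i)
    else 0

lemma replicate_getLast? (t : ℕ) : (List.replicate t (0:ℕ)).getLast?.getD 0 = 0 := by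
  induction t with
  | zero => rfl
  | succ t ih =>
    cases t with
    | zero => rfl
    | succ t => simpa [List.replicate_succ, List.getLast?_cons_cons] using ih

lemma replicate_getLastD (t : ℕ) : (List.replicate t (0:ℕ)).getLastD 0 = 0 := by
  rw [List.getLastD_eq_getLast?]; exact replicate_getLast? t

lemma cpoly_rep (p t : ℕ) : Cpoly p (List.replicate t 0) = CpolyZ p t := by
  have h : CpolyZ p t = CpolyZ p (List.replicate t (0:ℕ)).length := by
    rw [List.length_replicate]
  rw [h]
  unfold Cpoly CpolyZ
  refine Finset.sum_congr rfl fun j hj => ?_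
  simp [List.get_eq_getElem, List.getElem_replicate, replicate_getLastD, List.getLastD_eq_getLast?, replicate_getLast?]

lemma evalZ (p t : ℕ) (x : ℚ) :
    (CpolyZ p t).eval x =
      ∑ j ∈ Fintype.piFinset (fun _ : Fin t => Finset.range (p + 1)),
        if (∑ i, j i) ≤ p then
          (∏ i : Fin t,
            ((p + 1 - ∑ i' ∈ Finset.Iio i, j i').choose (j i) : ℚ) * bernoulli' (j i) /
              ((p + 1 - ∑ i' ∈ Finset.Iio i, j i' : ℕ) : ℚ)) *
            x ^ (p + 1 - ∑ i, j i)
        else 0 := by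
  unfold CpolyZ
  rw [Polynomial.eval_finset_sum]
  refine Finset.sum_congr rfl fun j hj => ?_
  split <;> simp

lemma evalZ_zero (p : ℕ) (x : ℚ) : (CpolyZ p 0).eval x = x ^ (p + 1) := by
  rw [evalZ]
  have huniv : Fintype.piFinset (fun _ : Fin 0 => Finset.range (p + 1)) = Finset.univ := by
    rw [Finset.eq_univ_iff_forall]
    intro j
    simp only [Fintype.mem_piFinset]
    intro i
    exact absurd i.2 (by omega)
  rw [huniv, Finset.sum_eq_single_of_mem (fun _ : Fin 0 => 0) (Finset.mem_univ _)
      (fun j _ hne => absurd (Subsingleton.elim _ _) hne)]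
  simp

lemma key (p s n : ℕ) :
    (CpolyZ p (s + 1)).eval (n : ℚ) =
      ∑ m ∈ Finset.Icc 1 n, (CpolyZ p s).eval (m : ℚ) * (m : ℚ)⁻¹ := by
  classical
  -- the explicit summand on the product index set
  set g : ((Fin s → ℕ) × ℕ) → ℚ := fun q =>
    if (∑ i, q.1 i) + q.2 ≤ p then
      (∏ i : Fin s, ((p + 1 - ∑ i' ∈ Finset.Iio i, q.1 i').choose (q.1 i) : ℚ) *
          bernoulli' (q.1 i) / ((p + 1 - ∑ i' ∈ Finset.Iio i, q.1 i' : ℕ) : ℚ)) *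
        (((p + 1 - ∑ i, q.1 i).choose q.2 : ℚ) * bernoulli' q.2 /
          ((p + 1 - ∑ i, q.1 i : ℕ) : ℚ)) *
        (n : ℚ) ^ (p + 1 - ((∑ i, q.1 i) + q.2))
    else 0 with hg
  have hL : (CpolyZ p (s + 1)).eval (n : ℚ) =
      ∑ q ∈ (Fintype.piFinset (fun _ : Fin s => Finset.range (p + 1))) ×ˢ
        Finset.range (p + 1), g q := by
    rw [evalZ]
    refine Finset.sum_nbij'
      (i := fun (j : Fin (s+1) → ℕ) => ((fun i => j i.castSucc, j (Fin.last s)) : (Fin s → ℕ) × ℕ))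
      (j := fun q => Fin.snoc q.1 q.2) ?_ ?_ ?_ ?_ ?_
    · intro j hj
      simp only [Fintype.mem_piFinset] at hj
      simp only [Finset.mem_product, Fintype.mem_piFinset]
      exact ⟨fun i => hj _, hj _⟩
    · intro q hq
      simp only [Finset.mem_product, Fintype.mem_piFinset] at hq
      simp only [Fintype.mem_piFinset]
      intro i
      refine Fin.lastCases ?_ ?_ i
      · simpa using hq.2
      · intro i'; simpa using hq.1 i'
    · intro j _
      exact Fin.snoc_init_self j
    · intro q hq
      ext
      · simp [Fin.snoc_castSucc]
      · simp [Fin.snoc_last]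
    · intro j _
      have hsum : (∑ i : Fin (s+1), j i) = (∑ i : Fin s, j i.castSucc) + j (Fin.last s) :=
        Fin.sum_univ_castSucc j
      have hIio : ∀ i : Fin s, (∑ i' ∈ Finset.Iio (i.castSucc), j i')
          = ∑ i' ∈ Finset.Iio i, j i'.castSucc := by
        intro i
        rw [Fin.Iio_castSucc, Finset.sum_map]
        rfl
      have hIioLast : (∑ i' ∈ Finset.Iio (Fin.last s), j i') = ∑ i : Fin s, j i.castSucc := by
        rw [Fin.Iio_last_eq_map, Finset.sum_map]
        rfl
      rw [hg]
      simp only [hsum, Fin.prod_univ_castSucc, hIio, hIioLast]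
  rw [hL, Finset.sum_product]
  -- massage the right-hand side
  have hR : ∀ m ∈ Finset.Icc 1 n, (CpolyZ p s).eval (m : ℚ) * (m : ℚ)⁻¹ =
      ∑ j ∈ Fintype.piFinset (fun _ : Fin s => Finset.range (p + 1)),
        (if (∑ i, j i) ≤ p then
          (∏ i : Fin s, ((p + 1 - ∑ i' ∈ Finset.Iio i, j i').choose (j i) : ℚ) *
              bernoulli' (j i) / ((p + 1 - ∑ i' ∈ Finset.Iio i, j i' : ℕ) : ℚ)) *
            (m : ℚ) ^ (p - ∑ i, j i)
        else 0) := by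
    intro m hm
    have hm1 : (1 : ℕ) ≤ m := (Finset.mem_Icc.mp hm).1
    have hm0 : (m : ℚ) ≠ 0 := by positivity
    rw [evalZ, Finset.sum_mul]
    refine Finset.sum_congr rfl fun j _ => ?_
    rw [ite_mul, zero_mul]
    by_cases hc : (∑ i, j i) ≤ p
    · rw [if_pos hc, if_pos hc, show p + 1 - (∑ i, j i) = (p - ∑ i, j i) + 1 from by omega,
        mul_assoc, show (m:ℚ) ^ ((p - ∑ i, j i) + 1) * (m:ℚ)⁻¹ = (m:ℚ) ^ (p - ∑ i, j i) from by
          rw [pow_succ, mul_assoc, mul_inv_cancel₀ hm0, mul_one]]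
    · rw [if_neg hc, if_neg hc]
  rw [Finset.sum_congr rfl hR]
  conv_rhs => rw [Finset.sum_comm]
  refine Finset.sum_congr rfl fun j _ => ?_
  by_cases hc : (∑ i, j i) ≤ p
  · simp only [if_pos hc, hg]
    rw [← Finset.mul_sum]
    set q := p - ∑ i, j i with hqdef
    have hq : p + 1 - (∑ i, j i) = q + 1 := by omega
    have hIcc : ∑ m ∈ Finset.Icc 1 n, (m : ℚ) ^ q
        = ∑ x ∈ Finset.range (q + 1),
            bernoulli' x * ((q + 1).choose x) * (n : ℚ) ^ (q + 1 - x) / ((q : ℚ) + 1) := by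
      rw [← Finset.Ico_add_one_right_eq_Icc]
      exact_mod_cast sum_Ico_pow n q
    rw [hIcc]
    have hfil : (Finset.range (p+1)).filter (fun x => (∑ i, j i) + x ≤ p)
        = Finset.range (q + 1) := by
      ext x
      simp only [Finset.mem_filter, Finset.mem_range]
      omega
    rw [← Finset.sum_filter, hfil, Finset.mul_sum]
    refine Finset.sum_congr rfl fun x hx => ?_
    rw [hq, show p + 1 - ((∑ i, j i) + x) = q + 1 - x from by omega]
    push_cast
    ring
  · simp only [hg]
    rw [Finset.sum_eq_zero fun x _ => if_neg (by omega),
      Finset.sum_eq_zero fun m _ => if_neg hc]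

lemma key0 (p n : ℕ) :
    (CpolyZ p 1).eval (n : ℚ) = ∑ m ∈ Finset.Icc 1 n, (m : ℚ) ^ p := by
  rw [key p 0 n]
  refine Finset.sum_congr rfl fun m hm => ?_
  have hm1 : (1:ℕ) ≤ m := (Finset.mem_Icc.mp hm).1
  have hm0 : (m:ℚ) ≠ 0 := by positivity
  rw [evalZ_zero, pow_succ, mul_assoc, mul_inv_cancel₀ hm0, mul_one]

lemma Hs_neg (p n : ℕ) : Hs n [-(p:ℤ)] = ∑ m ∈ Finset.Icc 1 n, (m : ℚ) ^ p := by
  simp only [Hs]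
  refine Finset.sum_congr rfl fun m hm => ?_
  rw [zpow_neg, inv_inv, zpow_natCast, mul_one]

lemma Hs_one_succ (j n : ℕ) :
    Hs (n+1) (List.replicate (j+1) (1:ℤ)) =
      Hs n (List.replicate (j+1) (1:ℤ)) + (((n+1:ℕ)):ℚ)⁻¹ * Hs n (List.replicate j (1:ℤ)) := by
  simp only [List.replicate_succ, Hs]
  rw [Finset.sum_Icc_succ_top (by omega : 1 ≤ n + 1)]
  simp only [zpow_one, Nat.add_sub_cancel]

lemma sum_shift (f : ℕ → ℚ) (r : ℕ) :
    ∑ i ∈ Finset.range r, f (i+1) = ∑ i ∈ Finset.Icc 1 r, f i := by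
  induction r with
  | zero => simp
  | succ r ih => rw [Finset.sum_range_succ, ih, Finset.sum_Icc_succ_top (by omega)]

lemma telescope (T T' D U : ℕ → ℚ) (r : ℕ) (c : ℚ)
    (hstep : ∀ i ∈ Finset.range (r+1), T' i = T i + D i + (if i < r then U i else 0))
    (hD0 : D 0 = c)
    (hDs : ∀ i, D (i+1) = -U i) :
    ∑ i ∈ Finset.range (r+1), T' i = (∑ i ∈ Finset.range (r+1), T i) + c := by
  rw [Finset.sum_congr rfl hstep, Finset.sum_add_distrib, Finset.sum_add_distrib]
  have h1 : ∑ i ∈ Finset.range (r+1), (if i < r then U i else 0)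
      = ∑ i ∈ Finset.range r, U i := by
    rw [Finset.sum_range_succ, if_neg (lt_irrefl r), add_zero]
    exact Finset.sum_congr rfl fun i hi => if_pos (Finset.mem_range.mp hi)
  have h2 : ∑ i ∈ Finset.range (r+1), D i = c - ∑ i ∈ Finset.range r, U i := by
    rw [Finset.sum_range_succ']
    simp only [hDs, hD0, Finset.sum_neg_distrib]
    ring
  rw [h1, h2]
  ring

lemma main (p r : ℕ) (n : ℕ) :
    Hs n (-(p : ℤ) :: List.replicate r 1) =
      ∑ i ∈ Finset.range (r+1),
        (-1:ℚ)^i * (CpolyZ p (i+1)).eval (n:ℚ) * Hs n (List.replicate (r-i) 1) := by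
  induction n with
  | zero =>
    have hL : Hs 0 (-(p : ℤ) :: List.replicate r 1) = 0 := by simp [Hs]
    rw [hL]
    symm
    refine Finset.sum_eq_zero fun i hi => ?_
    have h0 : (CpolyZ p (i+1)).eval ((0:ℕ):ℚ) = 0 := by
      rw [key p i 0]
      simp
    rw [show ((0:ℕ):ℚ) = ((0:ℚ)) from by norm_num] at h0
    norm_num [h0]
  | succ n ih =>
    have hN0 : (((n+1:ℕ)):ℚ) ≠ 0 := by positivity
    have hLHS : Hs (n+1) (-(p : ℤ) :: List.replicate r 1)
        = Hs n (-(p : ℤ) :: List.replicate r 1)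
          + (((n+1:ℕ)):ℚ)^p * Hs n (List.replicate r 1) := by
      simp only [Hs]
      rw [Finset.sum_Icc_succ_top (by omega : 1 ≤ n + 1)]
      simp only [zpow_neg, inv_inv, zpow_natCast, Nat.add_sub_cancel]
    have hE0 : (CpolyZ p 1).eval (((n+1:ℕ)):ℚ)
        = (CpolyZ p 1).eval ((n:ℕ):ℚ) + (((n+1:ℕ)):ℚ)^p := by
      rw [key0, key0, Finset.sum_Icc_succ_top (by omega : 1 ≤ n + 1)]
    have hE : ∀ i : ℕ, (CpolyZ p (i+2)).eval (((n+1:ℕ)):ℚ)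
        = (CpolyZ p (i+2)).eval ((n:ℕ):ℚ)
          + (CpolyZ p (i+1)).eval (((n+1:ℕ)):ℚ) * (((n+1:ℕ)):ℚ)⁻¹ := by
      intro i
      rw [show i + 2 = (i + 1) + 1 from rfl, key p (i+1) (n+1), key p (i+1) n,
        Finset.sum_Icc_succ_top (by omega : 1 ≤ n + 1)]
    calc Hs (n+1) (-(p : ℤ) :: List.replicate r 1)
        = Hs n (-(p : ℤ) :: List.replicate r 1)
            + (((n+1:ℕ)):ℚ)^p * Hs n (List.replicate r 1) := hLHS
      _ = (∑ i ∈ Finset.range (r+1),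
            (-1:ℚ)^i * (CpolyZ p (i+1)).eval ((n:ℕ):ℚ) * Hs n (List.replicate (r-i) 1))
            + (((n+1:ℕ)):ℚ)^p * Hs n (List.replicate r 1) := by rw [ih]
      _ = ∑ i ∈ Finset.range (r+1),
            (-1:ℚ)^i * (CpolyZ p (i+1)).eval (((n+1:ℕ)):ℚ)
              * Hs (n+1) (List.replicate (r-i) 1) := by
        symm
        refine telescope
          (fun i => (-1:ℚ)^i * (CpolyZ p (i+1)).eval ((n:ℕ):ℚ) * Hs n (List.replicate (r-i) 1))
          (fun i => (-1:ℚ)^i * (CpolyZ p (i+1)).eval (((n+1:ℕ)):ℚ)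
            * Hs (n+1) (List.replicate (r-i) 1))
          (fun i => (-1:ℚ)^i
            * ((CpolyZ p (i+1)).eval (((n+1:ℕ)):ℚ) - (CpolyZ p (i+1)).eval ((n:ℕ):ℚ))
            * Hs n (List.replicate (r-i) 1))
          (fun i => (-1:ℚ)^i * (CpolyZ p (i+1)).eval (((n+1:ℕ)):ℚ)
            * ((((n+1:ℕ)):ℚ)⁻¹ * Hs n (List.replicate (r-1-i) 1)))
          r _ ?_ ?_ ?_
        · intro i hi
          beta_reduce
          by_cases hir : i < r
          · rw [if_pos hir, show r - i = (r-1-i)+1 from by omega, Hs_one_succ]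
            ring
          · rw [if_neg hir, show r - i = 0 from by
              have := Finset.mem_range.mp hi; omega]
            simp only [List.replicate_zero, Hs]
            ring
        · simp only [pow_zero, one_mul, Nat.sub_zero, hE0]
          ring
        · intro i
          beta_reduce
          rw [show r - (i+1) = r - 1 - i from by omega, hE i]
          ring

theorem stmt_3' (p : ℕ) (r : ℕ) (n : ℕ) :
    Hs n (-(p : ℤ) :: List.replicate r (1 : ℤ)) =
      Hs n [-(p : ℤ)] * Hs n (List.replicate r (1 : ℤ)) +
        ∑ i ∈ Finset.Icc 1 r, (-1 : ℚ) ^ i * (Cpoly p (List.replicate (i + 1) 0)).eval (n : ℚ) *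
          Hs n (List.replicate (r - i) (1 : ℤ)) := by
  rw [main p r n]
  have hsplit : ∀ (g : ℕ → ℚ),
      ∑ i ∈ Finset.range (r+1), g i = g 0 + ∑ i ∈ Finset.Icc 1 r, g i := by
    intro g
    rw [Finset.sum_range_succ', sum_shift]
    ring
  rw [hsplit]
  have h0 : (CpolyZ p 1).eval ((n:ℕ):ℚ) = Hs n [-(p:ℤ)] := by rw [key0, Hs_neg]
  congr 1
  · simp only [pow_zero, one_mul, Nat.sub_zero, h0]
  · exact Finset.sum_congr rfl fun i _ => by rw [cpoly_rep]

/-- Corollary 2.2.  For `p ∈ ℕ₀`, `r ∈ ℕ`, `n ∈ ℕ`: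
`H_n(−p,{1}_r) = H_n(−p)·H_n({1}_r) + ∑_{i=1}^r (−1)^i C^{(p)}_{0,…,0}(n)·H_n({1}_{r−i})`,
where in the `i`-th summand the subscript of `C^{(p)}` consists of `i` zeros. -/
theorem stmt_3 (p : ℕ) (r : ℕ) (hr : 0 < r) (n : ℕ) (hn : 0 < n) :
    Hs n (-(p : ℤ) :: List.replicate r (1 : ℤ)) =
      Hs n [-(p : ℤ)] * Hs n (List.replicate r (1 : ℤ)) +
        ∑ i ∈ Finset.Icc 1 r, (-1 : ℚ) ^ i * (Cpoly p (List.replicate (i + 1) 0)).eval (n : ℚ) *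
          Hs n (List.replicate (r - i) (1 : ℤ)) := by
  exact stmt_3' p r n
end

section
/- For every p ∈ ℕ₀ and every n ∈ ℕ, one has Σ_{m=1}^{n} m^p·H_{m−1}^2 = C^{(p)}(n)·H_n^2 − (2·C^{(p)}_0(n) + B_p)·H_n + 2·C^{(p)}_{0,0}(n) − C^{(p)}_1(n). -/
open Finset Polynomial

set_option linter.unusedVariables false

noncomputable def cc (p a j : ℕ) : ℚ :=
  ((p + 1 - a).choose j : ℚ) * bernoulli' j / ((p + 1 - a : ℕ) : ℚ)

lemma Cpoly_widen (q P : ℕ) (h : q ≤ P) (l : List ℕ) :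
    Cpoly q l = ∑ j ∈ Fintype.piFinset (fun _ : Fin l.length => Finset.range (P + 1)),
    if (∑ i, j i) + l.getLastD 0 ≤ q then
      Polynomial.C (∏ i : Fin l.length,
        ((q + 1 - l.get i - ∑ i' ∈ Finset.Iio i, j i').choose (j i) : ℚ) * bernoulli' (j i) /
          ((q + 1 - l.get i - ∑ i' ∈ Finset.Iio i, j i' : ℕ) : ℚ)) *
        Polynomial.X ^ (q + 1 - l.getLastD 0 - ∑ i, j i)
    else 0 := by
  unfold Cpoly
  apply Finset.sum_subset
  · exact Fintype.piFinset_subset _ _ fun a => Finset.range_subset_range.2 (by omega)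
  · intro f hf hnf
    rw [if_neg]
    intro hc
    obtain ⟨i, hi⟩ : ∃ i, f i ∉ Finset.range (q + 1) := by
      by_contra hcon
      push_neg at hcon
      exact hnf (Fintype.mem_piFinset.2 hcon)
    have h1 : q + 1 ≤ f i := by simpa using hi
    have h2 : f i ≤ ∑ i', f i' := Finset.single_le_sum (fun _ _ => Nat.zero_le _) (Finset.mem_univ i)
    omega

lemma sum_Iio_fin (N : ℕ) (b : Fin N) (f : Fin N → ℕ) :
    ∑ i' ∈ Finset.Iio b, f i' = ∑ i' : Fin N, if i' < b then f i' else 0 := by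
  rw [← Finset.sum_filter]
  congr 1
  ext x
  simp

lemma sum_Iio_cons {n : ℕ} (x : ℕ) (k : Fin n → ℕ) (i : Fin n) :
    ∑ i' ∈ Finset.Iio (i.succ), (Fin.cons x k : Fin (n + 1) → ℕ) i' =
      x + ∑ i' ∈ Finset.Iio i, k i' := by
  rw [sum_Iio_fin, sum_Iio_fin, Fin.sum_univ_succ]
  simp [Fin.succ_pos, Fin.succ_lt_succ_iff]

lemma Iio_zero_fin (n : ℕ) : (Finset.Iio (0 : Fin (n+1))) = ∅ := by
  ext x; simp

lemma Cpoly_cons (p a b : ℕ) (l : List ℕ) :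
    Cpoly p (a :: b :: l) =
      ∑ j ∈ Finset.range (p + 1), Polynomial.C (cc p a j) * Cpoly (p - j) (b :: l) := by
  rw [eq_comm]
  calc ∑ j ∈ Finset.range (p + 1), Polynomial.C (cc p a j) * Cpoly (p - j) (b :: l)
      = ∑ j ∈ Finset.range (p + 1),
          ∑ k ∈ Fintype.piFinset (fun _ : Fin (b :: l).length => Finset.range (p + 1)),
          Polynomial.C (cc p a j) *
          (if (∑ i, k i) + (b :: l).getLastD 0 ≤ p - j then
            Polynomial.C (∏ i : Fin (b :: l).length,
              ((p - j + 1 - (b :: l).get i - ∑ i' ∈ Finset.Iio i, k i').choose (k i) : ℚ) *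
                bernoulli' (k i) /
                ((p - j + 1 - (b :: l).get i - ∑ i' ∈ Finset.Iio i, k i' : ℕ) : ℚ)) *
              Polynomial.X ^ (p - j + 1 - (b :: l).getLastD 0 - ∑ i, k i)
          else 0) := by
        refine Finset.sum_congr rfl fun j hj => ?_
        rw [Cpoly_widen (p - j) p (Nat.sub_le p j), Finset.mul_sum]
    _ = ∑ z ∈ (Finset.range (p + 1)) ×ˢ
          Fintype.piFinset (fun _ : Fin (b :: l).length => Finset.range (p + 1)),
          Polynomial.C (cc p a z.1) *
          (if (∑ i, z.2 i) + (b :: l).getLastD 0 ≤ p - z.1 then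
            Polynomial.C (∏ i : Fin (b :: l).length,
              ((p - z.1 + 1 - (b :: l).get i - ∑ i' ∈ Finset.Iio i, z.2 i').choose (z.2 i) : ℚ) *
                bernoulli' (z.2 i) /
                ((p - z.1 + 1 - (b :: l).get i - ∑ i' ∈ Finset.Iio i, z.2 i' : ℕ) : ℚ)) *
              Polynomial.X ^ (p - z.1 + 1 - (b :: l).getLastD 0 - ∑ i, z.2 i)
          else 0) := by
        rw [Finset.sum_product]
    _ = Cpoly p (a :: b :: l) := by
        unfold Cpoly
        refine Finset.sum_nbij' (fun z => Fin.cons z.1 z.2)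
          (fun g => (g (0 : Fin ((b :: l).length + 1)), Fin.tail (fun i : Fin ((b::l).length + 1) => g i)))
          ?_ ?_ ?_ ?_ ?_
        · rintro ⟨j1, k⟩ hz
          simp only [Finset.mem_product, Finset.mem_range, Fintype.mem_piFinset] at hz
          refine Fintype.mem_piFinset.2 fun i => ?_
          refine Fin.cases ?_ ?_ i
          · simpa using hz.1
          · intro i'; simpa using hz.2 i'
        · intro g hg
          simp only [Fintype.mem_piFinset] at hg
          simp only [Finset.mem_product, Finset.mem_range, Fintype.mem_piFinset]
          exact ⟨by simpa using hg (0 : Fin ((b :: l).length + 1)), fun i => by simpa [Fin.tail] using hg i.succ⟩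
        · rintro ⟨j1, k⟩ _
          simp [Fin.tail_cons]
        · intro g _
          simp [Fin.cons_self_tail]
        · rintro ⟨j1, k⟩ hz
          simp only [Finset.mem_product, Finset.mem_range, Fintype.mem_piFinset] at hz
          obtain ⟨hj1, hk⟩ := hz
          dsimp only
          have hsum : (∑ i : Fin (a :: b :: l).length,
              (Fin.cons j1 k : Fin (a :: b :: l).length → ℕ) i) = j1 + ∑ i, k i :=
            Fin.sum_cons j1 k
          have hlast : (a :: b :: l).getLastD 0 = (b :: l).getLastD 0 := by
            simp [List.getLastD_cons]
          have hfac : ∀ i : Fin (b :: l).length,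
              (((p + 1 - (a :: b :: l).get i.succ -
                  ∑ i' ∈ Finset.Iio i.succ,
                    (Fin.cons j1 k : Fin (a :: b :: l).length → ℕ) i').choose
                  ((Fin.cons j1 k : Fin (a :: b :: l).length → ℕ) i.succ) : ℚ) *
                bernoulli' ((Fin.cons j1 k : Fin (a :: b :: l).length → ℕ) i.succ) /
                ((p + 1 - (a :: b :: l).get i.succ -
                  ∑ i' ∈ Finset.Iio i.succ,
                    (Fin.cons j1 k : Fin (a :: b :: l).length → ℕ) i' : ℕ) : ℚ)) =
              ((p - j1 + 1 - (b :: l).get i - ∑ i' ∈ Finset.Iio i, k i').choose (k i) : ℚ) *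
                bernoulli' (k i) /
                ((p - j1 + 1 - (b :: l).get i - ∑ i' ∈ Finset.Iio i, k i' : ℕ) : ℚ) := by
            intro i
            rw [sum_Iio_cons j1 k i, Fin.cons_succ,
              show (a :: b :: l).get i.succ = (b :: l).get i from rfl]
            have harith : p + 1 - (b :: l).get i - (j1 + ∑ i' ∈ Finset.Iio i, k i') =
                p - j1 + 1 - (b :: l).get i - (∑ i' ∈ Finset.Iio i, k i') := by omega
            rw [harith]
          by_cases hcond : (∑ i, k i) + (b :: l).getLastD 0 ≤ p - j1
          · rw [if_pos hcond, if_pos (by rw [hsum, hlast]; omega)]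
            have hE : p + 1 - (a :: b :: l).getLastD 0 -
                (∑ i : Fin (a :: b :: l).length,
                  (Fin.cons j1 k : Fin (a :: b :: l).length → ℕ) i) =
                p - j1 + 1 - (b :: l).getLastD 0 - (∑ i, k i) := by
              rw [hsum, hlast]; omega
            have hprod : (∏ i : Fin (a :: b :: l).length,
                (((p + 1 - (a :: b :: l).get i -
                    ∑ i' ∈ Finset.Iio i,
                      (Fin.cons j1 k : Fin (a :: b :: l).length → ℕ) i').choose
                    ((Fin.cons j1 k : Fin (a :: b :: l).length → ℕ) i) : ℚ) *
                  bernoulli' ((Fin.cons j1 k : Fin (a :: b :: l).length → ℕ) i) /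
                  ((p + 1 - (a :: b :: l).get i -
                    ∑ i' ∈ Finset.Iio i,
                      (Fin.cons j1 k : Fin (a :: b :: l).length → ℕ) i' : ℕ) : ℚ))) =
                cc p a j1 * ∏ i : Fin (b :: l).length,
                  ((p - j1 + 1 - (b :: l).get i - ∑ i' ∈ Finset.Iio i, k i').choose (k i) : ℚ) *
                    bernoulli' (k i) /
                    ((p - j1 + 1 - (b :: l).get i - ∑ i' ∈ Finset.Iio i, k i' : ℕ) : ℚ) := by
              refine (Fin.prod_univ_succ _).trans ?_
              refine congrArg₂ (· * ·) ?_ (Finset.prod_congr rfl fun i _ => hfac i)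
              rw [show (a :: b :: l).get (0 : Fin ((b :: l).length + 1)) = a from rfl]
              simp [cc, Iio_zero_fin, Fin.cons_zero]
            rw [hE, hprod, map_mul, mul_assoc]
          · rw [if_neg hcond, if_neg (by rw [hsum, hlast]; omega), mul_zero]

lemma Cpoly_single (p a : ℕ) :
    Cpoly p [a] = ∑ j ∈ Finset.range (p + 1),
      if j + a ≤ p then Polynomial.C (cc p a j) * Polynomial.X ^ (p + 1 - a - j) else 0 := by
  unfold Cpoly
  refine Finset.sum_nbij' (fun g => g (0 : Fin 1)) (fun j => fun _ => j) ?_ ?_ ?_ ?_ ?_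
  · intro g hg
    simpa using (Fintype.mem_piFinset.1 hg) (0 : Fin 1)
  · intro j hj
    exact Fintype.mem_piFinset.2 fun _ => hj
  · intro g _
    funext i
    rw [Fin.eq_zero i]
  · intro j _
    rfl
  · intro g _
    have h1 : (∑ i : Fin [a].length, g i) = g (0 : Fin 1) := Fin.sum_univ_one _
    have h2 : ([a].getLastD 0) = a := rfl
    have h3 : (∏ i : Fin [a].length,
        (((p + 1 - [a].get i - ∑ i' ∈ Finset.Iio i, g i').choose (g i) : ℚ) * bernoulli' (g i) /
          ((p + 1 - [a].get i - ∑ i' ∈ Finset.Iio i, g i' : ℕ) : ℚ))) = cc p a (g (0 : Fin 1)) := by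
      refine (Fin.prod_univ_one _).trans ?_
      rw [show ([a].get (0 : Fin 1)) = a from rfl]
      simp [cc, Iio_zero_fin]
    rw [h1, h2, h3]

lemma Cpoly_one_succ (q : ℕ) : Cpoly (q + 1) [1] = Cpoly q [0] := by
  rw [Cpoly_single, Cpoly_single, Finset.sum_range_succ]
  rw [if_neg (by omega)]
  rw [add_zero]
  refine Finset.sum_congr rfl fun j hj => ?_
  simp only [Finset.mem_range] at hj
  have h1 : q + 1 + 1 - 1 = q + 1 - 0 := by omega
  have h3 : (j + 1 ≤ q + 1) = (j + 0 ≤ q) := by simp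
  rw [cc, cc, h1]
  simp only [h3]

lemma Cpoly_one_zero : Cpoly 0 [1] = 0 := by
  rw [Cpoly_single]
  simp

lemma eval_single (p : ℕ) (x : ℚ) :
    (Cpoly p [0]).eval x = ∑ j ∈ Finset.range (p + 1), cc p 0 j * x ^ (p + 1 - j) := by
  rw [Cpoly_single, Polynomial.eval_finset_sum]
  refine Finset.sum_congr rfl fun j hj => ?_
  simp only [Finset.mem_range] at hj
  rw [if_pos (by omega)]
  simp

lemma F1 (p n : ℕ) :
    (Cpoly p [0]).eval ((n : ℕ) : ℚ) = ∑ m ∈ Finset.Icc 1 n, (m : ℚ) ^ p := by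
  rw [eval_single, ← Finset.Ico_add_one_right_eq_Icc, sum_Ico_pow]
  refine Finset.sum_congr rfl fun j hj => ?_
  rw [cc]
  push_cast
  ring

lemma eval_cons (p a b : ℕ) (l : List ℕ) (x : ℚ) :
    (Cpoly p (a :: b :: l)).eval x =
      ∑ j ∈ Finset.range (p + 1), cc p a j * (Cpoly (p - j) (b :: l)).eval x := by
  rw [Cpoly_cons, Polynomial.eval_finset_sum]
  simp [Polynomial.eval_mul]

lemma F2 (p n : ℕ) :
    (Cpoly p [0, 0]).eval ((n : ℕ) : ℚ) =
      ∑ m ∈ Finset.Icc 1 n, (Cpoly p [0]).eval ((m : ℕ) : ℚ) / m := by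
  rw [eval_cons]
  calc ∑ j ∈ Finset.range (p + 1), cc p 0 j * (Cpoly (p - j) [0]).eval ((n : ℕ) : ℚ)
      = ∑ j ∈ Finset.range (p + 1), ∑ m ∈ Finset.Icc 1 n, cc p 0 j * (m : ℚ) ^ (p - j) := by
        refine Finset.sum_congr rfl fun j hj => ?_
        rw [F1, Finset.mul_sum]
    _ = ∑ m ∈ Finset.Icc 1 n, ∑ j ∈ Finset.range (p + 1), cc p 0 j * (m : ℚ) ^ (p - j) :=
        Finset.sum_comm
    _ = ∑ m ∈ Finset.Icc 1 n, (Cpoly p [0]).eval ((m : ℕ) : ℚ) / m := by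
        refine Finset.sum_congr rfl fun m hm => ?_
        have hm1 : 1 ≤ m := (Finset.mem_Icc.1 hm).1
        have hm0 : (m : ℚ) ≠ 0 := by positivity
        rw [eval_single, Finset.sum_div]
        refine Finset.sum_congr rfl fun j hj => ?_
        simp only [Finset.mem_range] at hj
        rw [show p + 1 - j = (p - j) + 1 from by omega, pow_succ]
        field_simp
    
lemma F3 (p n : ℕ) :
    (Cpoly p [0, 0, 0]).eval ((n : ℕ) : ℚ) =
      ∑ m ∈ Finset.Icc 1 n, (Cpoly p [0, 0]).eval ((m : ℕ) : ℚ) / m := by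
  rw [eval_cons]
  calc ∑ j ∈ Finset.range (p + 1), cc p 0 j * (Cpoly (p - j) [0, 0]).eval ((n : ℕ) : ℚ)
      = ∑ j ∈ Finset.range (p + 1), ∑ m ∈ Finset.Icc 1 n,
          cc p 0 j * ((Cpoly (p - j) [0]).eval ((m : ℕ) : ℚ) / m) := by
        refine Finset.sum_congr rfl fun j hj => ?_
        rw [F2, Finset.mul_sum]
    _ = ∑ m ∈ Finset.Icc 1 n, ∑ j ∈ Finset.range (p + 1),
          cc p 0 j * ((Cpoly (p - j) [0]).eval ((m : ℕ) : ℚ) / m) := Finset.sum_comm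
    _ = ∑ m ∈ Finset.Icc 1 n, (Cpoly p [0, 0]).eval ((m : ℕ) : ℚ) / m := by
        refine Finset.sum_congr rfl fun m hm => ?_
        rw [eval_cons, Finset.sum_div]
        refine Finset.sum_congr rfl fun j hj => ?_
        rw [mul_div_assoc]

lemma F4 (p n : ℕ) :
    (Cpoly p [0, 1]).eval ((n : ℕ) : ℚ) =
      ∑ m ∈ Finset.Icc 1 n, (Cpoly p [0]).eval ((m : ℕ) : ℚ) / (m : ℚ) ^ 2
        - bernoulli' p * ∑ m ∈ Finset.Icc 1 n, ((m : ℕ) : ℚ)⁻¹ := by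
  rw [eval_cons, Finset.sum_range_succ, Nat.sub_self, Cpoly_one_zero]
  simp only [Polynomial.eval_zero, mul_zero, add_zero]
  calc ∑ j ∈ Finset.range p, cc p 0 j * (Cpoly (p - j) [1]).eval ((n : ℕ) : ℚ)
      = ∑ j ∈ Finset.range p, ∑ m ∈ Finset.Icc 1 n, cc p 0 j * (m : ℚ) ^ (p - j - 1) := by
        refine Finset.sum_congr rfl fun j hj => ?_
        simp only [Finset.mem_range] at hj
        rw [show p - j = (p - j - 1) + 1 from by omega, Cpoly_one_succ, F1, Finset.mul_sum]
        refine Finset.sum_congr rfl fun m _ => ?_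
        rw [show p - j - 1 + 1 - 1 = p - j - 1 from by omega]
    _ = ∑ m ∈ Finset.Icc 1 n, ∑ j ∈ Finset.range p, cc p 0 j * (m : ℚ) ^ (p - j - 1) :=
        Finset.sum_comm
    _ = ∑ m ∈ Finset.Icc 1 n,
          ((Cpoly p [0]).eval ((m : ℕ) : ℚ) / (m : ℚ) ^ 2 - bernoulli' p * ((m : ℕ) : ℚ)⁻¹) := by
        refine Finset.sum_congr rfl fun m hm => ?_
        have hm1 : 1 ≤ m := (Finset.mem_Icc.1 hm).1
        have hm0 : (m : ℚ) ≠ 0 := by positivity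
        rw [eval_single, Finset.sum_range_succ]
        have hccp : cc p 0 p = bernoulli' p := by
          rw [cc]
          simp only [Nat.sub_zero, Nat.choose_succ_self_right]
          have hp0 : ((p : ℚ) + 1) ≠ 0 := by positivity
          push_cast
          field_simp
        rw [hccp, show p + 1 - p = 1 from by omega, pow_one]
        rw [add_div, Finset.sum_div]
        have hterm : ∀ j ∈ Finset.range p,
            cc p 0 j * (m : ℚ) ^ (p + 1 - j) / (m : ℚ) ^ 2 = cc p 0 j * (m : ℚ) ^ (p - j - 1) := by
          intro j hj
          simp only [Finset.mem_range] at hj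
          rw [show p + 1 - j = (p - j - 1) + 2 from by omega, pow_add]
          field_simp
        rw [Finset.sum_congr rfl hterm]
        field_simp
        ring
    _ = ∑ m ∈ Finset.Icc 1 n, (Cpoly p [0]).eval ((m : ℕ) : ℚ) / (m : ℚ) ^ 2
        - bernoulli' p * ∑ m ∈ Finset.Icc 1 n, ((m : ℕ) : ℚ)⁻¹ := by
        rw [Finset.sum_sub_distrib, Finset.mul_sum]

noncomputable def Sf (p n : ℕ) : ℚ := ∑ m ∈ Finset.Icc 1 n, (m : ℚ) ^ p
noncomputable def Tf (p n : ℕ) : ℚ := ∑ m ∈ Finset.Icc 1 n, Sf p m / m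
noncomputable def Uf (p n : ℕ) : ℚ := ∑ m ∈ Finset.Icc 1 n, Tf p m / m
noncomputable def Vf (p n : ℕ) : ℚ := ∑ m ∈ Finset.Icc 1 n, Sf p m / (m : ℚ) ^ 2
noncomputable def Hh (n : ℕ) : ℚ := ∑ m ∈ Finset.Icc 1 n, ((m : ℚ))⁻¹

lemma F1' (p n : ℕ) : (Cpoly p [0]).eval ((n : ℕ) : ℚ) = Sf p n := F1 p n

lemma F2' (p n : ℕ) : (Cpoly p [0, 0]).eval ((n : ℕ) : ℚ) = Tf p n := by
  rw [F2, Tf]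
  exact Finset.sum_congr rfl fun m _ => by rw [F1']

lemma F3' (p n : ℕ) : (Cpoly p [0, 0, 0]).eval ((n : ℕ) : ℚ) = Uf p n := by
  rw [F3, Uf]
  exact Finset.sum_congr rfl fun m _ => by rw [F2']

lemma F4' (p n : ℕ) :
    (Cpoly p [0, 1]).eval ((n : ℕ) : ℚ) = Vf p n - bernoulli' p * Hh n := by
  rw [F4, Vf, Hh]
  congr 1
  exact Finset.sum_congr rfl fun m _ => by rw [F1']

lemma Hs_one (n : ℕ) : Hs n [1] = Hh n := by
  rw [Hs, Hh]
  refine Finset.sum_congr rfl fun m _ => ?_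
  rw [Hs]
  simp

lemma main_ind (p : ℕ) : ∀ n : ℕ,
    ∑ m ∈ Finset.Icc 1 n, (m : ℚ) ^ p * (Hh (m - 1)) ^ 2 =
      Sf p n * (Hh n) ^ 2 - 2 * Tf p n * Hh n + 2 * Uf p n - Vf p n := by
  intro n
  induction n with
  | zero => simp [Sf, Tf, Uf, Vf, Hh]
  | succ n ih =>
    have key : ∀ f : ℕ → ℚ, ∑ m ∈ Finset.Icc 1 (n + 1), f m =
        (∑ m ∈ Finset.Icc 1 n, f m) + f (n + 1) := fun f =>
      Finset.sum_Icc_succ_top (Nat.succ_le_succ (Nat.zero_le n)) f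
    have hS : Sf p (n + 1) = Sf p n + ((n + 1 : ℕ) : ℚ) ^ p := key _
    have hT : Tf p (n + 1) = Tf p n + Sf p (n + 1) / ((n + 1 : ℕ) : ℚ) := key _
    have hU : Uf p (n + 1) = Uf p n + Tf p (n + 1) / ((n + 1 : ℕ) : ℚ) := key _
    have hV : Vf p (n + 1) = Vf p n + Sf p (n + 1) / ((n + 1 : ℕ) : ℚ) ^ 2 := key _
    have hH : Hh (n + 1) = Hh n + (((n + 1 : ℕ) : ℚ))⁻¹ := key _
    rw [key, ih, hU, hV, hT, hS, hH]
    rw [show (n + 1) - 1 = n from rfl]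
    ring


/-- Theorem 2.5.  For `p ∈ ℕ₀`, `n ∈ ℕ`:
`∑_{m=1}^{n} m^p·H_{m−1}² = C^{(p)}(n)·H_n² − (2·C^{(p)}_0(n) + B_p)·H_n
  + 2·C^{(p)}_{0,0}(n) − C^{(p)}_1(n)`. -/
theorem stmt_9 (p : ℕ) (n : ℕ) (hn : 0 < n) :
    ∑ m ∈ Finset.Icc 1 n, (m : ℚ) ^ p * (Hs (m - 1) [1]) ^ 2 =
      (Cpoly p [0]).eval (n : ℚ) * (Hs n [1]) ^ 2
        - (2 * (Cpoly p [0, 0]).eval (n : ℚ) + bernoulli' p) * Hs n [1]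
        + 2 * (Cpoly p [0, 0, 0]).eval (n : ℚ) - (Cpoly p [0, 1]).eval (n : ℚ) := by
  rw [F1', F2', F3', F4', Hs_one]
  rw [show ∑ m ∈ Finset.Icc 1 n, (m : ℚ) ^ p * (Hs (m - 1) [1]) ^ 2 =
      ∑ m ∈ Finset.Icc 1 n, (m : ℚ) ^ p * (Hh (m - 1)) ^ 2 from
    Finset.sum_congr rfl fun m _ => by rw [Hs_one]]
  rw [main_ind]
  ring
end
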